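/- arXiv:2308.16728 — 4 statements merged into one kernel-verified Lean document; each statement's English description precedes it below -/
import Mathlib

section
/- Let t ≥ 2 be an integer and let H be a connected graph with more than t vertices. For every real ε > 0 there exists r₀ such that for all integers r ≥ r₀ one has f(r, H) ≤ (1 + ε) · (r − 1)/(t − 1). -/
/-! A covering of the pairs of `Fin r` by blocks of size at most `t`, in which every point lies in
at most `k` blocks, yields an `H`-free `(r, k)`-graph: put a clique on the incidences `(B, x)` of
each block and let part `x` consist of the incidences of `x`. A copy of the connected graph `H`
would lie in a single clique, which has at most `t < |H|` vertices.

Such coverings are built recursively. If `n` is coprime to `1, …, t - 1`, the affine lines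
`{(i, a + b i)}` of `Fin t × ZMod n` cover every pair from distinct columns with each point on `n`
lines, and a cover of `ZMod n` copied into every column covers the remaining pairs. With `n ≈ r / t`
this turns a degree bound `c r + O(1)` into `((1 + c) / t) r + O(1)`, and iterating drives the
slope down to the fixed point `1 / (t - 1)`. -/

open SimpleGraph

/-- `G` is an `(r,k)`-graph: its vertex set can be partitioned into `r` parts,
each of size at most `k`, with at least one edge between any two distinct parts. -/
def IsRKGraph {V : Type} [Fintype V] (G : SimpleGraph V) (r k : ℕ) : Prop :=
  ∃ P : Fin r → Finset V,
    (∀ v : V, ∃! i, v ∈ P i) ∧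
    (∀ i, (P i).card ≤ k) ∧
    ∀ i j : Fin r, i ≠ j → ∃ u ∈ P i, ∃ w ∈ P j, G.Adj u w

/-- `G` contains a subgraph isomorphic to `H`. -/
def ContainsSub {W V : Type} (H : SimpleGraph W) (G : SimpleGraph V) : Prop :=
  ∃ f : H →g G, Function.Injective f

/-- `f(r,H)`: the minimum `k` for which there exists an `H`-free `(r,k)`-graph. -/
noncomputable def fGraph {W : Type} (H : SimpleGraph W) (r : ℕ) : ℕ :=
  sInf {k | ∃ (n : ℕ) (G : SimpleGraph (Fin n)), ¬ ContainsSub H G ∧ IsRKGraph G r k}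

def HasPairCover (α : Type*) [DecidableEq α] (t k : ℕ) : Prop :=
  ∃ D : Multiset (Finset α),
    (∀ B ∈ D, B.card ≤ t) ∧
    (∀ x y : α, x ≠ y → ∃ B ∈ D, x ∈ B ∧ y ∈ B) ∧
    ∀ x, D.countP (x ∈ ·) ≤ k

namespace HasPairCover

variable {α β : Type*} [DecidableEq α] [DecidableEq β] {t k : ℕ}

theorem comap (f : α ↪ β) (h : HasPairCover β t k) : HasPairCover α t k := by
  obtain ⟨D, hcard, hcov, hdeg⟩ := h
  refine ⟨D.map (·.preimage f f.injective.injOn), ?_, ?_, fun x => ?_⟩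
  · simp only [Multiset.mem_map]
    rintro _ ⟨B, hB, rfl⟩
    exact (Finset.card_le_card_of_injOn f (fun a ha => Finset.mem_preimage.mp ha)
      f.injective.injOn).trans (hcard B hB)
  · intro x y hxy
    obtain ⟨B, hB, hx, hy⟩ := hcov (f x) (f y) (f.injective.ne hxy)
    exact ⟨_, Multiset.mem_map_of_mem _ hB, by simpa using hx, by simpa using hy⟩
  · simpa [Multiset.countP_map, ← Multiset.countP_eq_card_filter] using hdeg (f x)

end HasPairCover

theorem hasPairCover_pairs {α : Type*} [Fintype α] [DecidableEq α] {t : ℕ} (ht : 2 ≤ t) :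
    HasPairCover α t (2 * Fintype.card α) := by
  refine ⟨(Finset.univ : Finset (α × α)).val.map fun p => {p.1, p.2}, ?_, ?_, fun x => ?_⟩
  · simp only [Multiset.mem_map]
    rintro _ ⟨p, -, rfl⟩
    exact (Finset.card_le_two).trans ht
  · intro x y _
    exact ⟨{x, y}, Multiset.mem_map_of_mem _ (Finset.mem_univ_val (x, y)), by simp, by simp⟩
  · rw [Multiset.countP_map]
    change (Finset.univ.filter _).card ≤ _
    calc (Finset.univ.filter fun p : α × α => x ∈ ({p.1, p.2} : Finset α)).card
        ≤ ({x} ×ˢ Finset.univ ∪ Finset.univ ×ˢ {x} : Finset (α × α)).card := by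
          refine Finset.card_le_card fun p => ?_
          simp only [Finset.mem_filter, Finset.mem_insert, Finset.mem_singleton, Finset.mem_union,
            Finset.mem_product, Finset.mem_univ, and_true, true_and]
          rintro (h | h) <;> simp [h]
      _ ≤ 2 * Fintype.card α := by
          refine (Finset.card_union_le _ _).trans ?_
          simp [two_mul]

theorem HasPairCover.prod_of_transversal {ι α : Type*} [Fintype ι] [DecidableEq ι] [DecidableEq α]
    {t k m : ℕ} (h : HasPairCover α t k) (T : Multiset (Finset (ι × α)))
    (hT_card : ∀ B ∈ T, B.card ≤ t)
    (hT_cover : ∀ p q : ι × α, p.1 ≠ q.1 → ∃ B ∈ T, p ∈ B ∧ q ∈ B)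
    (hT_deg : ∀ p, T.countP (p ∈ ·) ≤ m) :
    HasPairCover (ι × α) t (m + k) := by
  obtain ⟨D, hD_card, hD_cover, hD_deg⟩ := h
  let column (i : ι) : Multiset (Finset (ι × α)) := D.map (·.map (Function.Embedding.sectR i α))
  refine ⟨T + ∑ i, column i, ?_, fun p q hpq => ?_, fun p => ?_⟩
  · simp only [Multiset.mem_add, Multiset.mem_sum, Finset.mem_univ, true_and, column,
      Multiset.mem_map]
    rintro _ (hB | ⟨i, B, hB, rfl⟩)
    · exact hT_card _ hB
    · exact (Finset.card_map _).trans_le (hD_card B hB)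
  · by_cases hcol : p.1 = q.1
    · obtain ⟨B, hB, hp, hq⟩ := hD_cover p.2 q.2 fun h => hpq (Prod.ext hcol h)
      refine ⟨B.map (Function.Embedding.sectR p.1 α), ?_, ?_, ?_⟩
      · exact Multiset.mem_add.mpr <| .inr <| Multiset.mem_sum.mpr
          ⟨p.1, Finset.mem_univ _, Multiset.mem_map_of_mem _ hB⟩
      · exact Finset.mem_map.mpr ⟨p.2, hp, rfl⟩
      · exact Finset.mem_map.mpr ⟨q.2, hq, Prod.ext hcol rfl⟩
    · obtain ⟨B, hB, hp, hq⟩ := hT_cover p q hcol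
      exact ⟨B, Multiset.mem_add.mpr (.inl hB), hp, hq⟩
  · obtain ⟨j, c⟩ := p
    have hcolumn (i : ι) :
        (column i).countP ((j, c) ∈ ·) = if i = j then D.countP (c ∈ ·) else 0 := by
      rw [Multiset.countP_map]
      split_ifs with hi
      · simp [hi, Multiset.countP_eq_card_filter]
      · simp [hi]
    have hsum : (∑ i, column i).countP ((j, c) ∈ ·) = ∑ i, (column i).countP ((j, c) ∈ ·) :=
      map_sum (Multiset.countPAddMonoidHom ((j, c) ∈ ·)) _ _
    rw [Multiset.countP_add, hsum, Finset.sum_congr rfl fun i _ => hcolumn i,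
      Finset.sum_ite_eq' Finset.univ]
    simpa using add_le_add (hT_deg (j, c)) (hD_deg c)

section AffineLines

variable {t n : ℕ}

def affineLine (t : ℕ) (a b : ZMod n) : Finset (Fin t × ZMod n) :=
  Finset.univ.image fun i => (i, a + b * (i : ℕ))

theorem mem_affineLine {a b : ZMod n} {p : Fin t × ZMod n} :
    p ∈ affineLine t a b ↔ p.2 = a + b * (p.1 : ℕ) := by
  constructor
  · simp only [affineLine, Finset.mem_image, Finset.mem_univ, true_and]
    rintro ⟨i, rfl⟩
    rfl
  · intro h
    exact Finset.mem_image.mpr ⟨p.1, Finset.mem_univ _, Prod.ext rfl h.symm⟩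

theorem isUnit_sub_of_coprime (hcop : ∀ m, 0 < m → m < t → m.Coprime n) {i j : Fin t}
    (hij : i ≠ j) : IsUnit (((i : ℕ) : ZMod n) - (j : ℕ)) := by
  wlog hji : j < i generalizing i j
  · simpa using (this hij.symm (lt_of_le_of_ne (not_lt.mp hji) hij)).neg
  rw [← Nat.cast_sub hji.le, ZMod.isUnit_iff_coprime]
  exact hcop _ (Nat.sub_pos_of_lt hji) (by omega)

theorem exists_affineLine_mem_mem (hcop : ∀ m, 0 < m → m < t → m.Coprime n)
    {p q : Fin t × ZMod n} (hpq : p.1 ≠ q.1) :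
    ∃ a b : ZMod n, p ∈ affineLine t a b ∧ q ∈ affineLine t a b := by
  rcases p with ⟨i, c⟩
  rcases q with ⟨j, d⟩
  have hunit := isUnit_sub_of_coprime hcop hpq
  set b := (c - d) * (((i : ℕ) : ZMod n) - (j : ℕ))⁻¹
  refine ⟨c - b * (i : ℕ), b, mem_affineLine.mpr (by ring), mem_affineLine.mpr ?_⟩
  have hb : b * (((i : ℕ) : ZMod n) - (j : ℕ)) = c - d := by
    rw [mul_assoc, mul_comm _ (_ - _), ZMod.mul_inv_of_unit _ hunit, mul_one]
  linear_combination hb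

theorem card_affineLine_le (a b : ZMod n) : (affineLine t a b).card ≤ t :=
  Finset.card_image_le.trans (Finset.card_fin t).le

theorem card_affineLine_mem_le [NeZero n] (p : Fin t × ZMod n) :
    (Finset.univ.filter fun ab : ZMod n × ZMod n => p ∈ affineLine t ab.1 ab.2).card ≤ n := by
  refine (Finset.card_le_card_of_injOn Prod.snd (fun _ _ => Finset.mem_univ _) ?_).trans
    (ZMod.card n).le
  intro ab hab ab' hab' hb
  simp only [Finset.coe_filter, Finset.mem_univ, true_and, Set.mem_ofPred_eq,
    mem_affineLine] at hab hab'
  refine Prod.ext ?_ hb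
  linear_combination hab' - hab - (p.1 : ℕ) * hb

end AffineLines

theorem HasPairCover.fin_prod_zmod {t n k : ℕ} [NeZero n]
    (hcop : ∀ m, 0 < m → m < t → m.Coprime n) (h : HasPairCover (ZMod n) t k) :
    HasPairCover (Fin t × ZMod n) t (n + k) := by
  refine h.prod_of_transversal
    ((Finset.univ : Finset (ZMod n × ZMod n)).val.map fun ab => affineLine t ab.1 ab.2)
    ?_ (fun p q hpq => ?_) (fun p => ?_)
  · simp only [Multiset.mem_map]
    rintro _ ⟨ab, -, rfl⟩
    exact card_affineLine_le _ _
  · obtain ⟨a, b, hp, hq⟩ := exists_affineLine_mem_mem hcop hpq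
    exact ⟨_, Multiset.mem_map_of_mem _ (Finset.mem_univ_val (a, b)), hp, hq⟩
  · rw [Multiset.countP_map]
    exact card_affineLine_mem_le p

theorem exists_coprime_near (t q : ℕ) :
    ∃ n, q ≤ n ∧ n ≤ q + (t - 1).factorial + 1 ∧ ∀ m, 0 < m → m < t → m.Coprime n := by
  set M := (t - 1).factorial with hM_def
  have hM : 0 < M := Nat.factorial_pos _
  refine ⟨M * (q / M + 1) + 1, ?_, ?_, fun m hm hmt => ?_⟩
  · have := Nat.lt_mul_div_succ q hM
    omega
  · have := Nat.mul_div_le q M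
    rw [mul_add]
    omega
  · obtain ⟨c, hc⟩ := Nat.dvd_factorial hm (by omega : m ≤ t - 1)
    rw [hM_def, hc, mul_assoc, Nat.coprime_mul_left_add_right]
    exact Nat.coprime_one_right m

def LinearlyCoverable (t : ℕ) (c : ℝ) : Prop :=
  ∃ b : ℝ, ∀ r : ℕ, ∃ k : ℕ, HasPairCover (Fin r) t k ∧ (k : ℝ) ≤ c * r + b

namespace LinearlyCoverable

variable {t : ℕ} {c : ℝ}

theorem mono {c' : ℝ} (h : LinearlyCoverable t c) (hc : c ≤ c') : LinearlyCoverable t c' := by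
  obtain ⟨b, hb⟩ := h
  refine ⟨b, fun r => ?_⟩
  obtain ⟨k, hk, hkb⟩ := hb r
  exact ⟨k, hk, hkb.trans (by gcongr)⟩

theorem two (ht : 2 ≤ t) : LinearlyCoverable t 2 :=
  ⟨0, fun r => ⟨2 * r, by simpa using hasPairCover_pairs (α := Fin r) ht, by simp⟩⟩

theorem step (ht : 2 ≤ t) (hc : 0 ≤ c) (h : LinearlyCoverable t c) :
    LinearlyCoverable t ((1 + c) / t) := by
  obtain ⟨b, hb⟩ := h
  set M := (t - 1).factorial
  refine ⟨(1 + c) * (M + 2) + b, fun r => ?_⟩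
  obtain ⟨n, hqn, hnq, hcop⟩ := exists_coprime_near t (r / t + 1)
  have : NeZero n := NeZero.of_pos ((Nat.succ_pos _).trans_le hqn)
  obtain ⟨k, hk, hkb⟩ := hb n
  have hzmod : HasPairCover (ZMod n) t k :=
    hk.comap (Function.Embedding.nonempty_of_card_le (by simp [ZMod.card])).some
  have hrn : r ≤ t * n :=
    (Nat.lt_mul_div_succ r (by omega : 0 < t)).le.trans (Nat.mul_le_mul_left t hqn)
  refine ⟨n + k, (hzmod.fin_prod_zmod hcop).comap
    (Function.Embedding.nonempty_of_card_le (by simpa [ZMod.card] using hrn)).some, ?_⟩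
  have hnR : (n : ℝ) ≤ r / t + M + 2 := by
    have hdiv : ((r / t : ℕ) : ℝ) ≤ r / t := Nat.cast_div_le
    have : (n : ℝ) ≤ (r / t : ℕ) + 1 + M + 1 := by exact_mod_cast hnq
    linarith
  calc ((n + k : ℕ) : ℝ) ≤ (1 + c) * n + b := by push_cast; linarith
    _ ≤ (1 + c) * (r / t + M + 2) + b := by gcongr
    _ = (1 + c) / t * r + ((1 + c) * (M + 2) + b) := by field_simp; ring

end LinearlyCoverable

theorem LinearlyCoverable.of_lt {t : ℕ} {c : ℝ} (ht : 2 ≤ t) (hc : 1 / ((t : ℝ) - 1) < c) :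
    LinearlyCoverable t c := by
  have ht1 : (1 : ℝ) < t := by exact_mod_cast ht
  have ht0 : (0 : ℝ) < (t : ℝ) - 1 := by linarith
  have hiter (L : ℕ) : LinearlyCoverable t (1 / ((t : ℝ) - 1) + 2 / (t : ℝ) ^ L) := by
    induction L with
    | zero => exact (two ht).mono (by simp only [pow_zero, div_one]; linarith [one_div_pos.mpr ht0])
    | succ L ih =>
      convert ih.step ht (by positivity) using 1
      field_simp
      ring
  obtain ⟨L, hL⟩ := exists_pow_lt_of_lt_one (by linarith : 0 < (c - 1 / ((t : ℝ) - 1)) / 2)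
    (by rwa [div_lt_one (by linarith)] : 1 / (t : ℝ) < 1)
  refine (hiter L).mono ?_
  rw [div_pow, one_pow] at hL
  have : 2 / (t : ℝ) ^ L = 2 * (1 / (t : ℝ) ^ L) := by ring
  linarith

section Transport

variable {V V' W : Type} {G : SimpleGraph V} {G' : SimpleGraph V'}

theorem ContainsSub.of_iso {H : SimpleGraph W} (h : ContainsSub H G) (φ : G ≃g G') :
    ContainsSub H G' := by
  obtain ⟨f, hf⟩ := h
  exact ⟨φ.toHom.comp f, φ.injective.comp hf⟩

theorem IsRKGraph.of_iso [Fintype V] [Fintype V'] {r k : ℕ} (h : IsRKGraph G r k)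
    (φ : G ≃g G') : IsRKGraph G' r k := by
  obtain ⟨P, hpart, hcard, hadj⟩ := h
  refine ⟨fun i => (P i).map φ.toEquiv.toEmbedding, fun v => ?_, fun i => ?_, fun i j hij => ?_⟩
  · simpa only [Finset.mem_map_equiv] using hpart (φ.toEquiv.symm v)
  · simpa using hcard i
  · obtain ⟨u, hu, w, hw, huw⟩ := hadj i j hij
    exact ⟨φ u, Finset.mem_map_of_mem _ hu, φ w, Finset.mem_map_of_mem _ hw, φ.map_adj_iff.mpr huw⟩

theorem fGraph_le_of_isRKGraph [Fintype V] {H : SimpleGraph W} {r k : ℕ} (hfree : ¬ContainsSub H G)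
    (h : IsRKGraph G r k) : fGraph H r ≤ k := by
  let φ := SimpleGraph.Iso.comap (Fintype.equivFin V).symm G
  exact Nat.sInf_le ⟨_, _, fun hH => hfree (hH.of_iso φ), h.of_iso φ.symm⟩

end Transport

theorem SimpleGraph.Preconnected.eq_of_forall_adj {V β : Type*} {G : SimpleGraph V}
    (hG : G.Preconnected) {g : V → β} (hg : ∀ u v, G.Adj u v → g u = g v) (u v : V) :
    g u = g v := by
  obtain ⟨p⟩ := hG u v
  induction p with
  | nil => rfl
  | cons h _ ih => exact (hg _ _ h).trans ih

section BlockGraph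

variable {α : Type}

abbrev BlockVertex (D : Multiset (Finset α)) : Type :=
  {q : Finset α × α // q.1 ∈ D ∧ q.2 ∈ q.1}

def blockGraph (D : Multiset (Finset α)) : SimpleGraph (BlockVertex D) :=
  SimpleGraph.fromRel fun u v => u.1.1 = v.1.1

theorem not_containsSub_blockGraph {W : Type} [Fintype W] {H : SimpleGraph W} {t : ℕ}
    (hconn : H.Connected) (hcard : t < Fintype.card W) {D : Multiset (Finset α)}
    (hD : ∀ B ∈ D, B.card ≤ t) : ¬ContainsSub H (blockGraph D) := by
  rintro ⟨f, hf⟩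
  obtain ⟨w₀⟩ : Nonempty W := Fintype.card_pos_iff.mp (by omega)
  have hblock (w : W) : (f w).1.1 = (f w₀).1.1 :=
    hconn.preconnected.eq_of_forall_adj (g := fun w => (f w).1.1)
      (fun u v huv => by simpa [blockGraph, eq_comm] using (f.map_adj huv).2) w w₀
  have hinj : Set.InjOn (fun w => (f w).1.2) (Finset.univ : Finset W) := by
    intro u _ v _ huv
    exact hf (Subtype.ext (Prod.ext ((hblock u).trans (hblock v).symm) huv))
  have := Finset.card_le_card_of_injOn _ (fun w _ => hblock w ▸ (f w).2.2) hinj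
  have := hD _ (f w₀).2.1
  simp only [Finset.card_univ] at *
  omega

theorem isRKGraph_blockGraph {r k : ℕ} {D : Multiset (Finset (Fin r))}
    (hcover : ∀ x y : Fin r, x ≠ y → ∃ B ∈ D, x ∈ B ∧ y ∈ B)
    (hdeg : ∀ x, D.countP (x ∈ ·) ≤ k) : IsRKGraph (blockGraph D) r k := by
  refine ⟨fun i => Finset.univ.filter fun v => v.1.2 = i, fun v => ⟨v.1.2, by simp, ?_⟩,
    fun i => ?_, fun i j hij => ?_⟩
  · simp [eq_comm]
  · have hinj : Set.InjOn (fun v : BlockVertex D => v.1.1)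
        (Finset.univ.filter fun v : BlockVertex D => v.1.2 = i) := by
      intro u hu v hv huv
      simp only [Finset.coe_filter, Finset.mem_univ, true_and, Set.mem_ofPred_eq] at hu hv
      exact Subtype.ext (Prod.ext huv (hu.trans hv.symm))
    refine (Finset.card_le_card_of_injOn (t := (D.filter (i ∈ ·)).toFinset) _ (fun v hv => ?_)
      hinj).trans ?_
    · simp only [Finset.coe_filter, Finset.mem_univ, true_and, Set.mem_ofPred_eq] at hv
      simpa [← hv] using v.2
    · exact (Multiset.toFinset_card_le _).trans ((Multiset.countP_eq_card_filter _ _).symm.trans_le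
        (hdeg i))
  · obtain ⟨B, hB, hi, hj⟩ := hcover i j hij
    refine ⟨⟨(B, i), hB, hi⟩, by simp, ⟨(B, j), hB, hj⟩, by simp, ?_⟩
    simp [blockGraph, hij]

end BlockGraph

theorem HasPairCover.fGraph_le {W : Type} [Fintype W] {H : SimpleGraph W} {t r k : ℕ}
    (hconn : H.Connected) (hcard : t < Fintype.card W) (h : HasPairCover (Fin r) t k) :
    fGraph H r ≤ k := by
  obtain ⟨D, hD_card, hD_cover, hD_deg⟩ := h
  exact fGraph_le_of_isRKGraph (not_containsSub_blockGraph hconn hcard hD_card)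
    (isRKGraph_blockGraph hD_cover hD_deg)

/-- If `t ≥ 2` and `H` is a connected graph with more than `t` vertices, then for every
`ε > 0` and all sufficiently large `r`, `f(r,H) ≤ (1+ε)·(r−1)/(t−1)`. -/
theorem stmt6 {W : Type} [Fintype W] (H : SimpleGraph W) (t : ℕ) (ht : 2 ≤ t)
    (hconn : H.Connected) (hcard : t < Fintype.card W) (ε : ℝ) (hε : 0 < ε) :
    ∃ r₀ : ℕ, ∀ r : ℕ, r₀ ≤ r →
      (fGraph H r : ℝ) ≤ (1 + ε) * (((r : ℝ) - 1) / ((t : ℝ) - 1)) := by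
  have ht1 : (0 : ℝ) < (t : ℝ) - 1 := by
    have : (2 : ℝ) ≤ t := by exact_mod_cast ht
    linarith
  obtain ⟨b, hb⟩ := LinearlyCoverable.of_lt (c := (1 + ε / 2) / ((t : ℝ) - 1)) ht
    (by gcongr; linarith)
  obtain ⟨r₀, hr₀⟩ := exists_nat_ge (2 * (b * ((t : ℝ) - 1) + 1 + ε) / ε)
  refine ⟨r₀, fun r hr => ?_⟩
  obtain ⟨k, hk, hkb⟩ := hb r
  have hr_large : 2 * (b * ((t : ℝ) - 1) + 1 + ε) ≤ ε * r := by
    rw [div_le_iff₀ hε] at hr₀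
    nlinarith [(Nat.cast_le (α := ℝ)).mpr hr]
  calc (fGraph H r : ℝ) ≤ k := by exact_mod_cast hk.fGraph_le hconn hcard
    _ ≤ (1 + ε / 2) / ((t : ℝ) - 1) * r + b := hkb
    _ = ((1 + ε / 2) * r + b * ((t : ℝ) - 1)) / ((t : ℝ) - 1) := by field_simp
    _ ≤ (1 + ε) * ((r : ℝ) - 1) / ((t : ℝ) - 1) := by gcongr; linarith
    _ = (1 + ε) * (((r : ℝ) - 1) / ((t : ℝ) - 1)) := mul_div_assoc _ _ _
end

section
/- Let m ≥ 2 and k ≥ 2 be integers and let c_1,…,c_k be positive integers with c_1 + ⋯ + c_k = m. If H is an m-uniform hypergraph that does not have Property B_{{c_1,…,c_k}}, then f_m(r, H) ≤ k for every integer r ≥ m. -/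
/-- An `m`-uniform edge set: every edge has exactly `m` vertices. -/
def IsUniform (m : ℕ) {n : ℕ} (E : Finset (Finset (Fin n))) : Prop :=
  ∀ e ∈ E, e.card = m

/-- The hypergraph with edge set `GE` contains a subhypergraph isomorphic to the
hypergraph with edge set `HE`: there is an injection of vertices sending every edge
of `HE` to an edge of `GE`. -/
def HypContains {n N : ℕ} (HE : Finset (Finset (Fin n))) (GE : Finset (Finset (Fin N))) : Prop :=
  ∃ f : Fin n → Fin N, Function.Injective f ∧ ∀ e ∈ HE, e.image f ∈ GE

/-- The hypergraph with edge set `GE` is an `(r,k)`-hypergraph (`m`-uniform setting):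
its vertex set can be partitioned into `r` parts of size at most `k` so that for every
`m`-element set of parts there is an edge meeting each of those parts in exactly one vertex. -/
def IsRKHyper {N : ℕ} (GE : Finset (Finset (Fin N))) (m r k : ℕ) : Prop :=
  ∃ P : Fin r → Finset (Fin N),
    (∀ v : Fin N, ∃! i, v ∈ P i) ∧
    (∀ i, (P i).card ≤ k) ∧
    ∀ S : Finset (Fin r), S.card = m → ∃ e ∈ GE, ∀ i ∈ S, (e ∩ P i).card = 1

/-- A hypergraph: a number of vertices together with an edge set. -/
abbrev Hyp := (n : ℕ) × Finset (Finset (Fin n))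

/-- `f_m(r, ℋ)`: the minimum `k` for which there is an `ℋ`-free `m`-uniform
`(r,k)`-hypergraph. -/
noncomputable def fHyper (m r : ℕ) (ℋ : Set Hyp) : ℕ :=
  sInf {k | ∃ (N : ℕ) (GE : Finset (Finset (Fin N))),
    IsUniform m GE ∧ (∀ H ∈ ℋ, ¬ HypContains H.2 GE) ∧ IsRKHyper GE m r k}

/-- A hypergraph has Property `B_{{c_1,…,c_k}}` if there is a `k`-coloring of its vertices
such that every edge contains exactly `c i` vertices of color `i` for each `i`. -/
def HasPropertyB {n : ℕ} (E : Finset (Finset (Fin n))) {k : ℕ} (c : Fin k → ℕ) : Prop :=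
  ∃ χ : Fin n → Fin k, ∀ e ∈ E, ∀ i : Fin k, (e.filter (fun v => χ v = i)).card = c i

noncomputable section
open Finset

def transEdge {r k : ℕ} {c : Fin k → ℕ} {S : Finset (Fin r)}
    (ψ : (Σ j : Fin k, Fin (c j)) ≃ {x // x ∈ S}) : Finset (Fin r × Fin k) :=
  Finset.univ.image fun p => (((ψ p : {x // x ∈ S}) : Fin r), p.1)

lemma transEdge_inj {r k : ℕ} {c : Fin k → ℕ} {S : Finset (Fin r)}
    (ψ : (Σ j : Fin k, Fin (c j)) ≃ {x // x ∈ S}) :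
    Function.Injective (fun p : Σ j : Fin k, Fin (c j) =>
      (((ψ p : {x // x ∈ S}) : Fin r), p.1)) := by
  intro p q h
  exact ψ.injective (Subtype.ext (congrArg Prod.fst h))

lemma transEdge_card {r k : ℕ} {c : Fin k → ℕ} {S : Finset (Fin r)}
    (ψ : (Σ j : Fin k, Fin (c j)) ≃ {x // x ∈ S}) :
    (transEdge ψ).card = ∑ j, c j := by
  rw [transEdge, Finset.card_image_of_injective _ (transEdge_inj ψ), Finset.card_univ,
    Fintype.card_sigma]
  simp

lemma transEdge_filter_snd {r k : ℕ} {c : Fin k → ℕ} {S : Finset (Fin r)}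
    (ψ : (Σ j : Fin k, Fin (c j)) ≃ {x // x ∈ S}) (j : Fin k) :
    ((transEdge ψ).filter fun x => x.2 = j).card = c j := by
  rw [transEdge, Finset.filter_image, Finset.card_image_of_injective _ (transEdge_inj ψ)]
  have : (Finset.univ.filter fun p : Σ j' : Fin k, Fin (c j') => p.1 = j)
      = Finset.univ.image fun x : Fin (c j) => (⟨j, x⟩ : Σ j' : Fin k, Fin (c j')) := by
    ext ⟨j', x⟩
    simp only [Finset.mem_filter, Finset.mem_univ, true_and, Finset.mem_image]
    constructor
    · rintro rfl; exact ⟨x, rfl⟩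
    · rintro ⟨x', hx⟩; cases hx; rfl
  simp only [] at this ⊢
  rw [this, Finset.card_image_of_injective _ sigma_mk_injective, Finset.card_univ,
    Fintype.card_fin]

lemma transEdge_filter_fst {r k : ℕ} {c : Fin k → ℕ} {S : Finset (Fin r)}
    (ψ : (Σ j : Fin k, Fin (c j)) ≃ {x // x ∈ S}) {i : Fin r} (hi : i ∈ S) :
    ((transEdge ψ).filter fun x => x.1 = i) = {(i, (ψ.symm ⟨i, hi⟩).1)} := by
  ext x
  simp only [transEdge, Finset.filter_image, Finset.mem_image, Finset.mem_filter,
    Finset.mem_univ, true_and, Finset.mem_singleton]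
  constructor
  · rintro ⟨p, hp, rfl⟩
    have : ψ p = ⟨i, hi⟩ := Subtype.ext hp
    have hps : p = ψ.symm ⟨i, hi⟩ := by rw [← this, Equiv.symm_apply_apply]
    simp [hp, hps]
  · rintro rfl
    exact ⟨ψ.symm ⟨i, hi⟩, by simp, by simp⟩


/-- If `m, k ≥ 2`, `c_1 + ⋯ + c_k = m` with all `c_i` positive, and `H` is an `m`-uniform
hypergraph without Property `B_{{c_1,…,c_k}}`, then `f_m(r, H) ≤ k` for every `r ≥ m`. -/
theorem stmt11 (m k : ℕ) (hm : 2 ≤ m) (hk : 2 ≤ k) (c : Fin k → ℕ)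
    (hc : ∀ i, 0 < c i) (hsum : ∑ i, c i = m)
    {n : ℕ} (HE : Finset (Finset (Fin n))) (hHuni : IsUniform m HE)
    (hB : ¬ HasPropertyB HE c) (r : ℕ) (hr : m ≤ r) :
    fHyper m r ({⟨n, HE⟩} : Set Hyp) ≤ k := by
  classical
  -- the equivalence used to build the edge for each m-set of parts
  have hcard : ∀ S : Finset (Fin r), S ∈ Finset.powersetCard m Finset.univ →
      Fintype.card (Σ j : Fin k, Fin (c j)) = Fintype.card {x // x ∈ S} := by
    intro S hS
    rw [Fintype.card_sigma, Fintype.card_coe, (Finset.mem_powersetCard.mp hS).2]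
    simp [hsum]
  set ψ : ∀ S : {S : Finset (Fin r) // S ∈ Finset.powersetCard m Finset.univ},
      (Σ j : Fin k, Fin (c j)) ≃ {x // x ∈ S.1} :=
    fun S => Fintype.equivOfCardEq (hcard S.1 S.2) with hψ
  set GE : Finset (Finset (Fin (r * k))) :=
    (Finset.powersetCard m (Finset.univ : Finset (Fin r))).attach.image
      (fun S => (transEdge (ψ S)).image finProdFinEquiv) with hGE
  apply Nat.sInf_le
  refine ⟨r * k, GE, ?_, ?_, ?_⟩
  · -- uniform
    intro e he
    rw [hGE] at he
    obtain ⟨S, -, rfl⟩ := Finset.mem_image.mp he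
    rw [Finset.card_image_of_injective _ finProdFinEquiv.injective, transEdge_card, hsum]
  · -- H-free
    intro H hH
    simp only [Set.mem_singleton_iff] at hH
    subst hH
    rintro ⟨f, hfinj, hf⟩
    apply hB
    refine ⟨fun v => (finProdFinEquiv.symm (f v)).2, ?_⟩
    intro e he i
    have hmem := hf e he
    rw [hGE] at hmem
    obtain ⟨S, -, hEq⟩ := Finset.mem_image.mp hmem
    have key : ((e.image f).filter fun x => (finProdFinEquiv.symm x).2 = i).card = c i := by
      rw [← hEq, Finset.filter_image,
        Finset.card_image_of_injective _ finProdFinEquiv.injective]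
      simp only [Equiv.symm_apply_apply]
      exact transEdge_filter_snd (ψ S) i
    rw [Finset.filter_image, Finset.card_image_of_injective _ hfinj] at key
    exact key
  · -- (r,k)-hypergraph
    refine ⟨fun i => Finset.univ.image fun j : Fin k => finProdFinEquiv (i, j), ?_, ?_, ?_⟩
    · intro v
      refine ⟨(finProdFinEquiv.symm v).1, ?_, ?_⟩
      · simp only [Finset.mem_image, Finset.mem_univ, true_and]
        exact ⟨(finProdFinEquiv.symm v).2, by rw [Prod.mk.eta, Equiv.apply_symm_apply]⟩
      · intro i hi
        simp only [Finset.mem_image, Finset.mem_univ, true_and] at hi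
        obtain ⟨j, rfl⟩ := hi
        simp
    · intro i
      apply le_trans (Finset.card_image_le)
      simp
    · intro S hS
      have hSmem : S ∈ Finset.powersetCard m Finset.univ :=
        Finset.mem_powersetCard.mpr ⟨Finset.subset_univ S, hS⟩
      refine ⟨(transEdge (ψ ⟨S, hSmem⟩)).image finProdFinEquiv, ?_, ?_⟩
      · rw [hGE]
        exact Finset.mem_image_of_mem _ (Finset.mem_attach _ ⟨S, hSmem⟩)
      · intro i hi
        have hP : (Finset.univ.image fun j : Fin k => finProdFinEquiv (i, j))
            = (Finset.univ.image (Prod.mk i)).image finProdFinEquiv := by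
          rw [Finset.image_image]; rfl
        beta_reduce
        rw [hP, ← Finset.image_inter _ _ finProdFinEquiv.injective,
          Finset.card_image_of_injective _ finProdFinEquiv.injective]
        have hPi : (Finset.univ.image (Prod.mk i) : Finset (Fin r × Fin k))
            = Finset.univ.filter fun x => x.1 = i := by
          ext ⟨a, b⟩
          simp only [Finset.mem_image, Finset.mem_univ, true_and, Finset.mem_filter,
            Prod.mk.injEq]
          constructor
          · rintro ⟨j, rfl, rfl⟩; rfl
          · rintro rfl; exact ⟨b, rfl, rfl⟩
        rw [hPi, Finset.inter_filter, Finset.inter_univ,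
          transEdge_filter_fst (ψ ⟨S, hSmem⟩) hi, Finset.card_singleton]
end
end

section
/- Let m ≥ 2 be an integer and let H be an m-uniform hypergraph that is not m-partite, i.e., there is no coloring of the vertices of H with m colors such that every edge contains exactly one vertex of each color. Then f_m(r, H) ≤ m for every integer r ≥ m. -/
noncomputable def edgeOf {r m : ℕ} (S : Finset (Fin r)) (h : S.card = m) :
    Finset (Fin (r * m)) :=
  Finset.univ.image (fun j : Fin m => finProdFinEquiv (S.orderEmbOfFin h j, j))

lemma edgeOf_inj {r m : ℕ} (S : Finset (Fin r)) (h : S.card = m) :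
    Function.Injective (fun j : Fin m => finProdFinEquiv (S.orderEmbOfFin h j, j)) := by
  intro a b hab
  have := finProdFinEquiv.injective hab
  exact (Prod.mk.injEq _ _ _ _).mp this |>.2

noncomputable def myGE (r m : ℕ) : Finset (Finset (Fin (r * m))) :=
  (Finset.univ.powersetCard m).attach.image fun S =>
    edgeOf S.1 (Finset.mem_powersetCard.mp S.2).2

lemma mem_myGE {r m : ℕ} {e : Finset (Fin (r * m))} :
    e ∈ myGE r m ↔ ∃ (S : Finset (Fin r)) (h : S.card = m), e = edgeOf S h := by
  constructor
  · intro he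
    rw [myGE, Finset.mem_image] at he
    obtain ⟨S, -, hS⟩ := he
    exact ⟨S.1, (Finset.mem_powersetCard.mp S.2).2, hS.symm⟩
  · rintro ⟨S, h, rfl⟩
    rw [myGE, Finset.mem_image]
    refine ⟨⟨S, ?_⟩, Finset.mem_attach _ _, rfl⟩
    exact Finset.mem_powersetCard.mpr ⟨Finset.subset_univ _, h⟩

lemma filter_edgeOf {r m : ℕ} (S : Finset (Fin r)) (h : S.card = m) (i : Fin m) :
    (edgeOf S h).filter (fun v => (finProdFinEquiv.symm v).2 = i) =
      {finProdFinEquiv (S.orderEmbOfFin h i, i)} := by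
  ext v
  simp only [edgeOf, Finset.mem_filter, Finset.mem_image, Finset.mem_univ, true_and,
    Finset.mem_singleton]
  constructor
  · rintro ⟨⟨j, rfl⟩, hc⟩
    simp only [Equiv.symm_apply_apply] at hc
    subst hc; rfl
  · rintro rfl
    exact ⟨⟨i, rfl⟩, by simp⟩

noncomputable def partOf {r : ℕ} (m : ℕ) (i : Fin r) : Finset (Fin (r * m)) :=
  Finset.univ.image (fun j : Fin m => finProdFinEquiv (i, j))

lemma inter_partOf {r m : ℕ} (S : Finset (Fin r)) (h : S.card = m) {i : Fin r}
    (hi : i ∈ S) : ((edgeOf S h) ∩ partOf m i).card = 1 := by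
  have hrange : Set.range (S.orderEmbOfFin h) = ↑S := S.range_orderEmbOfFin h
  have : (i : Fin r) ∈ Set.range (S.orderEmbOfFin h) := by rw [hrange]; exact hi
  obtain ⟨j₀, hj₀⟩ := this
  have : (edgeOf S h) ∩ partOf m i = {finProdFinEquiv (i, j₀)} := by
    ext v
    simp only [edgeOf, partOf, Finset.mem_inter, Finset.mem_image, Finset.mem_univ,
      true_and, Finset.mem_singleton]
    constructor
    · rintro ⟨⟨j, rfl⟩, ⟨j', hj'⟩⟩
      have := finProdFinEquiv.injective hj'
      obtain ⟨h1, h2⟩ := (Prod.mk.injEq _ _ _ _).mp this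
      have : j = j₀ := (S.orderEmbOfFin h).injective (by rw [hj₀, h1])
      subst this; rw [← h1]
    · rintro rfl
      exact ⟨⟨j₀, by rw [hj₀]⟩, ⟨j₀, rfl⟩⟩
  rw [this, Finset.card_singleton]

/-- If `m ≥ 2` and `H` is an `m`-uniform hypergraph that is not `m`-partite (there is no
coloring of its vertices with `m` colors such that every edge has exactly one vertex of
each color), then `f_m(r, H) ≤ m` for every `r ≥ m`. -/
theorem stmt12 (m : ℕ) (hm : 2 ≤ m) {n : ℕ} (HE : Finset (Finset (Fin n)))
    (hHuni : IsUniform m HE)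
    (hpart : ¬ ∃ χ : Fin n → Fin m, ∀ e ∈ HE, ∀ i : Fin m,
      (e.filter (fun v => χ v = i)).card = 1)
    (r : ℕ) (hr : m ≤ r) :
    fHyper m r ({⟨n, HE⟩} : Set Hyp) ≤ m := by
  apply Nat.sInf_le
  refine ⟨r * m, myGE r m, ?_, ?_, ?_⟩
  · -- uniformity
    intro e he
    obtain ⟨S, h, rfl⟩ := mem_myGE.mp he
    rw [edgeOf, Finset.card_image_of_injective _ (edgeOf_inj S h), Finset.card_univ,
      Fintype.card_fin]
  · -- H-freeness
    rintro H hH ⟨f, finj, hmap⟩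
    rw [Set.mem_singleton_iff] at hH
    subst hH
    apply hpart
    refine ⟨fun v => (finProdFinEquiv.symm (f v)).2, fun e he i => ?_⟩
    have h1 := hmap e he
    obtain ⟨S, h, hS⟩ := mem_myGE.mp h1
    have hfe : ((e.image f).filter (fun w => (finProdFinEquiv.symm w).2 = i)).card = 1 := by
      rw [hS, filter_edgeOf, Finset.card_singleton]
    have himg : (e.filter (fun a => (finProdFinEquiv.symm (f a)).2 = i)).image f
        = (e.image f).filter (fun w => (finProdFinEquiv.symm w).2 = i) := by
      rw [Finset.filter_image]
    calc (e.filter (fun v => (finProdFinEquiv.symm (f v)).2 = i)).card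
        = ((e.filter (fun a => (finProdFinEquiv.symm (f a)).2 = i)).image f).card :=
          (Finset.card_image_of_injective _ finj).symm
      _ = 1 := by rw [himg, hfe]
  · -- (r, m)-hypergraph
    refine ⟨partOf m, ?_, ?_, ?_⟩
    · intro v
      refine ⟨(finProdFinEquiv.symm v).1, ?_, ?_⟩
      · simp only [partOf, Finset.mem_image, Finset.mem_univ, true_and]
        exact ⟨(finProdFinEquiv.symm v).2, by rw [Prod.mk.eta, Equiv.apply_symm_apply]⟩
      · intro i hi
        simp only [partOf, Finset.mem_image, Finset.mem_univ, true_and] at hi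
        obtain ⟨j, hj⟩ := hi
        rw [← hj]; simp
    · intro i
      calc (partOf m i).card ≤ (Finset.univ : Finset (Fin m)).card := Finset.card_image_le
        _ = m := by simp
    · intro S hS
      exact ⟨edgeOf S hS, mem_myGE.mpr ⟨S, hS, rfl⟩, fun i hi => inter_partOf S hS hi⟩
end

section
/- Let m ≥ 2, t ≥ m and r ≥ t be integers and let 𝓗 be a set of connected m-uniform hypergraphs each having more than t vertices. If there exists an m-(r,t,1) design, then f_m(r, 𝓗) ≤ binom(r−1, m−1)/binom(t−1, m−1). -/
/-- A hypergraph is connected: any two vertices are joined by a sequence of steps within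
common edges. -/
def HypConnected (H : Hyp) : Prop :=
  ∀ u v : Fin H.1, Relation.ReflTransGen (fun x y => ∃ e ∈ H.2, x ∈ e ∧ y ∈ e) u v

/-- An `m`-`(r,t,1)` design: a collection of `t`-element blocks of the point set `Fin r`
such that every `m`-element set of points is contained in exactly one block. -/
def IsDesign (m t : ℕ) {r : ℕ} (B : Finset (Finset (Fin r))) : Prop :=
  (∀ b ∈ B, b.card = t) ∧
  ∀ S : Finset (Fin r), S.card = m → ∃! b, b ∈ B ∧ S ⊆ b

/-!
Blow the design up along its incidences: one vertex for each flag `(i, b)` with `i ∈ b ∈ B`,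
the part of a point `i` being its flags, and a complete `m`-uniform hypergraph on the `t` flags
of each block. Any `m` parts are met transversally inside the block through the corresponding
`m` points; a part has size `deg i = binom(r-1, m-1) / binom(t-1, m-1)` by double counting; and
the components are the blocks, so a connected subhypergraph has at most `t` vertices.
-/

open Finset

theorem fHyper_le_of_fintype {V : Type*} [Fintype V] [DecidableEq V] {m r k : ℕ}
    {ℋ : Set Hyp} (E : Finset (Finset V)) (P : Fin r → Finset V)
    (hE : ∀ e ∈ E, #e = m)
    (hfree : ∀ H ∈ ℋ, ∀ f : Fin H.1 → V, Function.Injective f → ¬ ∀ e ∈ H.2, e.image f ∈ E)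
    (hP : ∀ v, ∃! i, v ∈ P i) (hPk : ∀ i, #(P i) ≤ k)
    (hS : ∀ S : Finset (Fin r), #S = m → ∃ e ∈ E, ∀ i ∈ S, #(e ∩ P i) = 1) :
    fHyper m r ℋ ≤ k := by
  let σ := Fintype.equivFin V
  refine Nat.sInf_le ⟨_, E.map σ.finsetCongr.toEmbedding, ?_, ?_,
    fun i => (P i).map σ.toEmbedding, ?_, ?_, ?_⟩
  · intro e he
    rw [mem_map_equiv] at he
    simpa using hE _ he
  · rintro H hH ⟨f, hf, hfE⟩
    refine hfree H hH (σ.symm ∘ f) (σ.symm.injective.comp hf) fun e he => ?_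
    have := hfE e he
    rw [mem_map_equiv] at this
    simpa [map_eq_image, image_image] using this
  · intro v
    simpa [mem_map_equiv] using hP (σ.symm v)
  · intro i
    simpa using hPk i
  · intro S hSm
    obtain ⟨e, he, hPe⟩ := hS S hSm
    refine ⟨e.map σ.toEmbedding, mem_map_of_mem _ he, fun i hi => ?_⟩
    rw [← map_inter, card_map, hPe i hi]

theorem HypConnected.apply_eq_of_forall_edge {H : Hyp} (hH : HypConnected H) {β : Type*}
    (φ : Fin H.1 → β) (hφ : ∀ e ∈ H.2, ∀ x ∈ e, ∀ y ∈ e, φ x = φ y) (u v : Fin H.1) :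
    φ u = φ v := by
  induction hH u v with
  | refl => rfl
  | tail _ hxy ih =>
    obtain ⟨e, he, hx, hy⟩ := hxy
    exact ih.trans (hφ e he _ hx _ hy)

theorem IsDesign.card_filter_mem_mul_choose {m t r : ℕ} {B : Finset (Finset (Fin r))}
    (hB : IsDesign m t B) (hm : 1 ≤ m) (i : Fin r) :
    #{b ∈ B | i ∈ b} * (t - 1).choose (m - 1) = (r - 1).choose (m - 1) := by
  -- double count the pairs `(S, b)` with `S` an `(m-1)`-set avoiding `i` and `insert i S ⊆ b`
  have key := card_mul_eq_card_mul (fun S b => S ⊆ b) (m := 1) (n := (t - 1).choose (m - 1))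
    (s := (univ.erase i).powersetCard (m - 1)) (t := {b ∈ B | i ∈ b}) ?_ ?_
  · rwa [card_powersetCard, card_erase_of_mem (mem_univ i), card_univ, Fintype.card_fin,
      mul_one, eq_comm] at key
  · intro S hS
    rw [mem_powersetCard, subset_erase] at hS
    have hcard : #(insert i S) = m := by rw [card_insert_of_notMem hS.1.2, hS.2]; omega
    obtain ⟨b, hb, huniq⟩ := hB.2 _ hcard
    rw [card_eq_one]
    refine ⟨b, ext fun c => ?_⟩
    simp only [bipartiteAbove, mem_filter, mem_singleton, ← insert_subset_iff, and_assoc]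
    exact ⟨huniq c, fun h => h ▸ hb⟩
  · intro b hb
    rw [mem_filter] at hb
    have : ((univ.erase i).powersetCard (m - 1)).bipartiteBelow (fun S b => S ⊆ b) b =
        (b.erase i).powersetCard (m - 1) := by
      ext S
      simp only [bipartiteBelow, mem_filter, mem_powersetCard, subset_erase, subset_univ, true_and]
      tauto
    rw [this, card_powersetCard, card_erase_of_mem hb.2, hB.1 b hb.1]

abbrev BlockFlag {α : Type*} (B : Finset (Finset α)) : Type _ :=
  {p : α × Finset α // p.2 ∈ B ∧ p.1 ∈ p.2}

namespace BlockFlag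

variable {α : Type*} [Fintype α] [DecidableEq α] (B : Finset (Finset α))

def edge (b S : Finset α) : Finset (BlockFlag B) := {v | v.1.2 = b ∧ v.1.1 ∈ S}

def part (i : α) : Finset (BlockFlag B) := {v | v.1.1 = i}

def hypergraph (m : ℕ) : Finset (Finset (BlockFlag B)) :=
  (B.sigma fun b => b.powersetCard m).image fun x => edge B x.1 x.2

variable {B}

@[simp]
theorem mem_edge {b S : Finset α} {v : BlockFlag B} :
    v ∈ edge B b S ↔ v.1.2 = b ∧ v.1.1 ∈ S := by
  simp [edge]

@[simp]
theorem mem_part {i : α} {v : BlockFlag B} : v ∈ part B i ↔ v.1.1 = i := by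
  simp [part]

theorem card_edge {b S : Finset α} (hb : b ∈ B) (hS : S ⊆ b) : #(edge B b S) = #S := by
  refine card_bij (fun v _ => v.1.1) (fun v hv => (mem_edge.1 hv).2) ?_ ?_
  · intro v hv w hw hvw
    exact Subtype.ext (Prod.ext hvw ((mem_edge.1 hv).1.trans (mem_edge.1 hw).1.symm))
  · intro a ha
    exact ⟨⟨(a, b), hb, hS ha⟩, mem_edge.2 ⟨rfl, ha⟩, rfl⟩

theorem card_part (i : α) : #(part B i) = #{b ∈ B | i ∈ b} := by
  refine card_bij (fun v _ => v.1.2) ?_ ?_ ?_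
  · intro v hv
    exact mem_filter.2 ⟨v.2.1, mem_part.1 hv ▸ v.2.2⟩
  · intro v hv w hw hvw
    exact Subtype.ext (Prod.ext ((mem_part.1 hv).trans (mem_part.1 hw).symm) hvw)
  · intro b hb
    obtain ⟨hbB, hib⟩ := mem_filter.1 hb
    exact ⟨⟨(i, b), hbB, hib⟩, mem_part.2 rfl, rfl⟩

theorem edge_inter_part {b S : Finset α} {i : α} (hi : i ∈ S) :
    edge B b S ∩ part B i = edge B b {i} := by
  ext v
  simp only [mem_inter, mem_edge, mem_part, mem_singleton]
  constructor
  · exact fun ⟨⟨hb, _⟩, hv⟩ => ⟨hb, hv⟩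
  · exact fun ⟨hb, hv⟩ => ⟨⟨hb, hv ▸ hi⟩, hv⟩

theorem mem_hypergraph {m : ℕ} {e : Finset (BlockFlag B)} :
    e ∈ hypergraph B m ↔ ∃ b ∈ B, ∃ S ⊆ b, #S = m ∧ edge B b S = e := by
  simp [hypergraph, and_assoc]

theorem card_of_mem_hypergraph {m : ℕ} {e : Finset (BlockFlag B)} (he : e ∈ hypergraph B m) :
    #e = m := by
  obtain ⟨b, hb, S, hSb, hSm, rfl⟩ := mem_hypergraph.1 he
  rw [card_edge hb hSb, hSm]

theorem exists_mem_hypergraph_inter_part {m : ℕ} {b S : Finset α} (hb : b ∈ B)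
    (hSb : S ⊆ b) (hSm : #S = m) :
    ∃ e ∈ hypergraph B m, ∀ i ∈ S, #(e ∩ part B i) = 1 := by
  refine ⟨edge B b S, mem_hypergraph.2 ⟨b, hb, S, hSb, hSm, rfl⟩, fun i hi => ?_⟩
  rw [edge_inter_part hi, card_edge hb (singleton_subset_iff.2 (hSb hi)), card_singleton]

theorem card_le_of_connected_embedding {m t : ℕ} (hBt : ∀ b ∈ B, #b ≤ t)
    {H : Hyp} (hH : HypConnected H) {f : Fin H.1 → BlockFlag B} (hf : Function.Injective f)
    (hfE : ∀ e ∈ H.2, e.image f ∈ hypergraph B m) : H.1 ≤ t := by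
  rcases Nat.eq_zero_or_pos H.1 with h0 | hpos
  · omega
  have hblock (u : Fin H.1) : (f u).1.2 = (f ⟨0, hpos⟩).1.2 := by
    refine hH.apply_eq_of_forall_edge (fun u => (f u).1.2) (fun e he x hx y hy => ?_) _ _
    obtain ⟨b, -, S, -, -, hbS⟩ := mem_hypergraph.1 (hfE e he)
    have hmem (z) (hz : z ∈ e) : (f z).1.2 = b :=
      (mem_edge.1 (hbS ▸ mem_image_of_mem f hz)).1
    rw [hmem x hx, hmem y hy]
  set b₀ := (f ⟨0, hpos⟩).1.2
  calc H.1 = #(univ : Finset (Fin H.1)) := by simp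
    _ ≤ #(edge B b₀ b₀) :=
        card_le_card_of_injOn f (fun u _ => mem_edge.2 ⟨hblock u, hblock u ▸ (f u).2.2⟩)
          hf.injOn
    _ = #b₀ := card_edge (f ⟨0, hpos⟩).2.1 subset_rfl
    _ ≤ t := hBt _ (f ⟨0, hpos⟩).2.1

end BlockFlag

theorem fHyper_le_of_isDesign {m t r k : ℕ} {ℋ : Set Hyp} {B : Finset (Finset (Fin r))}
    (hB : IsDesign m t B) (hconn : ∀ H ∈ ℋ, HypConnected H) (hcard : ∀ H ∈ ℋ, t < H.1)
    (hk : ∀ i, #{b ∈ B | i ∈ b} ≤ k) : fHyper m r ℋ ≤ k := by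
  refine fHyper_le_of_fintype (BlockFlag.hypergraph B m) (BlockFlag.part B)
    (fun _ => BlockFlag.card_of_mem_hypergraph) ?_ ?_ ?_ ?_
  · intro H hH f hf hfE
    have := BlockFlag.card_le_of_connected_embedding (fun b hb => (hB.1 b hb).le) (hconn H hH)
      hf hfE
    exact (hcard H hH).not_ge this
  · exact fun v => ⟨v.1.1, BlockFlag.mem_part.2 rfl, fun i hi => (BlockFlag.mem_part.1 hi).symm⟩
  · exact fun i => BlockFlag.card_part i ▸ hk i
  · intro S hS
    obtain ⟨b, ⟨hb, hSb⟩, -⟩ := hB.2 S hS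
    exact BlockFlag.exists_mem_hypergraph_inter_part hb hSb hS

theorem stmt15_general (m t r : ℕ) (hm : 2 ≤ m) (ht : m ≤ t) (ℋ : Set Hyp)
    (hconn : ∀ H ∈ ℋ, HypConnected H)
    (hcard : ∀ H ∈ ℋ, t < H.1)
    (hdesign : ∃ B : Finset (Finset (Fin r)), IsDesign m t B) :
    (fHyper m r ℋ : ℝ)
      ≤ (Nat.choose (r - 1) (m - 1) : ℝ) / (Nat.choose (t - 1) (m - 1) : ℝ) := by
  obtain ⟨B, hB⟩ := hdesign
  have hdeg (i : Fin r) : #{b ∈ B | i ∈ b} ≤ (r - 1).choose (m - 1) / (t - 1).choose (m - 1) :=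
    (Nat.le_div_iff_mul_le (Nat.choose_pos (by omega))).2
      (hB.card_filter_mem_mul_choose (by omega) i).le
  calc (fHyper m r ℋ : ℝ)
      ≤ ((r - 1).choose (m - 1) / (t - 1).choose (m - 1) : ℕ) := by
        exact_mod_cast fHyper_le_of_isDesign hB hconn hcard hdeg
    _ ≤ _ := Nat.cast_div_le

/-- Let `m ≥ 2`, `t ≥ m`, `r ≥ t`, and let `ℋ` be a set of connected `m`-uniform
hypergraphs each having more than `t` vertices.  If there exists an `m`-`(r,t,1)` design,
then `f_m(r, ℋ) ≤ binom(r−1,m−1)/binom(t−1,m−1)`. -/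
theorem stmt15 (m t r : ℕ) (hm : 2 ≤ m) (ht : m ≤ t) (hr : t ≤ r) (ℋ : Set Hyp)
    (hconn : ∀ H ∈ ℋ, HypConnected H)
    (huni : ∀ H ∈ ℋ, IsUniform m H.2)
    (hcard : ∀ H ∈ ℋ, t < H.1)
    (hdesign : ∃ B : Finset (Finset (Fin r)), IsDesign m t B) :
    (fHyper m r ℋ : ℝ)
      ≤ (Nat.choose (r - 1) (m - 1) : ℝ) / (Nat.choose (t - 1) (m - 1) : ℝ) :=
  stmt15_general m t r hm ht ℋ hconn hcard hdesign
end
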